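/- For any d ∈ ℕ and b ∈ (0,∞), the Dirichlet kernel satisfies the global bound max over (s,x) ∈ S_d × S_d of κ_{s,b}(x) ≤ ∏_{k=1}^d (1/b + k), where κ_{s,b} = K_{s/b+1, s_{d+1}/b+1}. -/

import Mathlib

open MeasureTheory Real Finset

/-- The `d`-dimensional probability simplex. -/
def Sd (d : ℕ) : Set (Fin d → ℝ) :=
  {s | (∀ i, 0 ≤ s i) ∧ ∑ i, s i ≤ 1}

/-- The Dirichlet density with parameters `α` and `β`. -/
noncomputable def Kd {d : ℕ} (α : Fin d → ℝ) (β : ℝ) (s : Fin d → ℝ) : ℝ :=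
  (Real.Gamma (∑ i, α i + β) / (Real.Gamma β * ∏ i, Real.Gamma (α i))) *
    (1 - ∑ i, s i) ^ (β - 1) * ∏ i, (s i) ^ (α i - 1)

/-- The Dirichlet kernel `κ_{s,b} = K_{s/b + 1, s_{d+1}/b + 1}`. -/
noncomputable def kap {d : ℕ} (s : Fin d → ℝ) (b : ℝ) : (Fin d → ℝ) → ℝ :=
  Kd (fun i => s i / b + 1) ((1 - ∑ i, s i) / b + 1)

/-! With `t = (β - 1, α - 1)` and `X = (1 - ‖x‖₁, x)` the bound on `Kd` becomes
`Γ(∑ tᵢ + 1) ∏ Xᵢ ^ tᵢ ≤ (∑ Xᵢ) ^ (∑ tᵢ) ∏ Γ(tᵢ + 1)`, which is homogeneous in `X` and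
follows by induction on the number of factors from the case of two. After normalising `X` to `(u, 1 - u)`,
that case says `u ^ x (1 - u) ^ y ≤ (x + y + 1) B(x + 1, y + 1)`: on `[0, u]` the Beta integrand
dominates `u ^ x (1 - u) ^ y (w / u) ^ (x + y)`, on `[u, 1]` it dominates the mirror image, and
these two power functions have total integral `u ^ x (1 - u) ^ y / (x + y + 1)`. -/

theorem Real.Gamma_mul_Gamma_eq_Gamma_add_mul_integral {a c : ℝ} (ha : 0 < a) (hc : 0 < c) :
    Gamma a * Gamma c = Gamma (a + c) * ∫ u in (0 : ℝ)..1, u ^ (a - 1) * (1 - u) ^ (c - 1) := by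
  have hbeta : Complex.betaIntegral a c =
      ((∫ u in (0 : ℝ)..1, u ^ (a - 1) * (1 - u) ^ (c - 1) : ℝ) : ℂ) := by
    rw [Complex.betaIntegral, ← intervalIntegral.integral_ofReal]
    refine intervalIntegral.integral_congr fun u hu => ?_
    rw [Set.uIcc_of_le zero_le_one] at hu
    simp only [Complex.ofReal_mul, Complex.ofReal_cpow hu.1,
      Complex.ofReal_cpow (sub_nonneg.2 hu.2)]
    push_cast
    rfl
  have h := Complex.Gamma_mul_Gamma_eq_betaIntegral (s := a) (t := c)
    (by simpa using ha) (by simpa using hc)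
  rw [hbeta, ← Complex.ofReal_add, Complex.Gamma_ofReal, Complex.Gamma_ofReal,
    Complex.Gamma_ofReal, ← Complex.ofReal_mul, ← Complex.ofReal_mul] at h
  exact_mod_cast h

lemma rpow_mul_one_sub_rpow_mul_div_rpow_le {x y u w : ℝ} (hx : 0 ≤ x) (hy : 0 ≤ y)
    (hw : 0 ≤ w) (hwu : w ≤ u) (hu : u ≤ 1) :
    u ^ x * (1 - u) ^ y * (w / u) ^ (x + y) ≤ w ^ x * (1 - w) ^ y := by
  rcases (hw.trans hwu).eq_or_lt with rfl | hu0
  · obtain rfl : w = 0 := le_antisymm hwu hw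
    simp only [div_zero, sub_zero, one_rpow, mul_one]
    exact mul_le_of_le_one_right (rpow_nonneg le_rfl x)
      (rpow_le_one le_rfl zero_le_one (by positivity))
  have hwu' : 0 ≤ w / u := by positivity
  have hx' : u ^ x * (w / u) ^ x = w ^ x := by
    rw [← mul_rpow hu0.le hwu', mul_div_cancel₀ _ hu0.ne']
  have hy' : (1 - u) ^ y * (w / u) ^ y ≤ (1 - w) ^ y := by
    rw [← mul_rpow (by linarith) hwu']
    refine rpow_le_rpow (by positivity) ?_ hy
    rw [← mul_div_assoc, div_le_iff₀ hu0]
    nlinarith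
  calc u ^ x * (1 - u) ^ y * (w / u) ^ (x + y)
      = (u ^ x * (w / u) ^ x) * ((1 - u) ^ y * (w / u) ^ y) := by
        rw [rpow_add_of_nonneg hwu' hx hy]; ring
    _ ≤ w ^ x * (1 - w) ^ y := by
        rw [hx']; exact mul_le_mul_of_nonneg_left hy' (by positivity)

lemma continuous_rpow_mul_one_sub_rpow {x y : ℝ} (hx : 0 ≤ x) (hy : 0 ≤ y) :
    Continuous fun w : ℝ => w ^ x * (1 - w) ^ y := by
  fun_prop (disch := assumption)

lemma rpow_mul_one_sub_rpow_mul_le_integral {x y u : ℝ} (hx : 0 ≤ x) (hy : 0 ≤ y)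
    (hu0 : 0 ≤ u) (hu1 : u ≤ 1) :
    u ^ x * (1 - u) ^ y * (u / (x + y + 1)) ≤ ∫ w in (0 : ℝ)..u, w ^ x * (1 - w) ^ y := by
  rcases hu0.eq_or_lt with rfl | hu0
  · simp
  have htent : ∫ w in (0 : ℝ)..u, (w / u) ^ (x + y) = u / (x + y + 1) := by
    rw [intervalIntegral.integral_comp_div (fun v => v ^ (x + y)) hu0.ne', zero_div,
      div_self hu0.ne', integral_rpow (Or.inl (by linarith)), one_rpow,
      zero_rpow (by positivity), smul_eq_mul]
    ring
  rw [← htent, ← intervalIntegral.integral_const_mul]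
  refine intervalIntegral.integral_mono_on hu0.le ?_
    ((continuous_rpow_mul_one_sub_rpow hx hy).intervalIntegrable 0 u)
    fun w hw => rpow_mul_one_sub_rpow_mul_div_rpow_le hx hy hw.1 hw.2 hu1
  exact (continuous_const.mul ((continuous_rpow_const (by positivity)).comp
    (continuous_id.div_const u))).intervalIntegrable 0 u

lemma rpow_mul_one_sub_rpow_le_mul_integral {x y u : ℝ} (hx : 0 ≤ x) (hy : 0 ≤ y)
    (hu0 : 0 ≤ u) (hu1 : u ≤ 1) :
    u ^ x * (1 - u) ^ y ≤ (x + y + 1) * ∫ w in (0 : ℝ)..1, w ^ x * (1 - w) ^ y := by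
  have hf := continuous_rpow_mul_one_sub_rpow hx hy
  have hleft := rpow_mul_one_sub_rpow_mul_le_integral hx hy hu0 hu1
  have hright : u ^ x * (1 - u) ^ y * ((1 - u) / (x + y + 1)) ≤
      ∫ w in u..1, w ^ x * (1 - w) ^ y := by
    have h := rpow_mul_one_sub_rpow_mul_le_integral hy hx (sub_nonneg.2 hu1) (by linarith)
    have hflip : ∫ w in (0 : ℝ)..1 - u, w ^ y * (1 - w) ^ x =
        ∫ w in u..1, w ^ x * (1 - w) ^ y := by
      simpa only [sub_sub_cancel, sub_zero, mul_comm] using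
        intervalIntegral.integral_comp_sub_left (fun w => w ^ x * (1 - w) ^ y)
          (a := 0) (b := 1 - u) 1
    rwa [sub_sub_cancel, add_comm y x, mul_comm ((1 - u) ^ y), hflip] at h
  rw [← intervalIntegral.integral_add_adjacent_intervals (hf.intervalIntegrable 0 u)
    (hf.intervalIntegrable u 1)]
  have hxy : 0 < x + y + 1 := by positivity
  calc u ^ x * (1 - u) ^ y
      = (x + y + 1) * (u ^ x * (1 - u) ^ y * (u / (x + y + 1)) +
          u ^ x * (1 - u) ^ y * ((1 - u) / (x + y + 1))) := by
        field_simp; ring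
    _ ≤ _ := by gcongr

lemma Gamma_add_one_mul_rpow_mul_one_sub_rpow_le {x y u : ℝ} (hx : 0 ≤ x) (hy : 0 ≤ y)
    (hu0 : 0 ≤ u) (hu1 : u ≤ 1) :
    Gamma (x + y + 1) * (u ^ x * (1 - u) ^ y) ≤ Gamma (x + 1) * Gamma (y + 1) := by
  rw [Gamma_mul_Gamma_eq_Gamma_add_mul_integral (by positivity) (by positivity),
    show x + 1 + (y + 1) = (x + y + 1) + 1 by ring, Gamma_add_one (s := x + y + 1) (by positivity),
    add_sub_cancel_right, add_sub_cancel_right, mul_comm (x + y + 1), mul_assoc]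
  exact mul_le_mul_of_nonneg_left (rpow_mul_one_sub_rpow_le_mul_integral hx hy hu0 hu1)
    (Gamma_pos_of_pos (by positivity)).le

lemma Gamma_add_one_mul_rpow_mul_rpow_le {x y u v : ℝ} (hx : 0 ≤ x) (hy : 0 ≤ y)
    (hu : 0 ≤ u) (hv : 0 ≤ v) :
    Gamma (x + y + 1) * (u ^ x * v ^ y) ≤
      (u + v) ^ (x + y) * (Gamma (x + 1) * Gamma (y + 1)) := by
  rcases (add_nonneg hu hv).eq_or_lt with huv | huv
  · obtain ⟨rfl, rfl⟩ : u = 0 ∧ v = 0 := ⟨by linarith, by linarith⟩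
    rcases hx.eq_or_lt with rfl | hx
    · simp [Gamma_one, mul_comm]
    · rw [zero_rpow hx.ne']
      simp only [zero_mul, mul_zero]
      exact mul_nonneg (rpow_nonneg (by norm_num) _)
        (mul_nonneg (Gamma_nonneg_of_nonneg (by positivity))
          (Gamma_nonneg_of_nonneg (by positivity)))
  set p := u / (u + v)
  have hp1 : 1 - p = v / (u + v) := by
    rw [eq_div_iff huv.ne', sub_mul, div_mul_cancel₀ _ huv.ne']; ring
  have hscale : u ^ x * v ^ y = (u + v) ^ (x + y) * (p ^ x * (1 - p) ^ y) := by
    rw [hp1, div_rpow hu huv.le, div_rpow hv huv.le, rpow_add_of_nonneg huv.le hx hy]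
    field_simp
  rw [hscale, mul_left_comm]
  exact mul_le_mul_of_nonneg_left
    (Gamma_add_one_mul_rpow_mul_one_sub_rpow_le hx hy (by positivity)
      (div_le_one_of_le₀ (by linarith) huv.le))
    (by positivity)

theorem Gamma_sum_add_one_mul_prod_rpow_le {ι : Type*} (s : Finset ι) {t X : ι → ℝ}
    (ht : ∀ i, 0 ≤ t i) (hX : ∀ i, 0 ≤ X i) :
    Gamma (∑ i ∈ s, t i + 1) * ∏ i ∈ s, X i ^ t i ≤
      (∑ i ∈ s, X i) ^ (∑ i ∈ s, t i) * ∏ i ∈ s, Gamma (t i + 1) := by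
  classical
  induction s using Finset.induction_on with
  | empty => simp
  | insert a s ha ih =>
    rw [sum_insert ha, sum_insert ha, prod_insert ha, prod_insert ha]
    set y := ∑ i ∈ s, t i
    have hy : 0 ≤ y := sum_nonneg fun i _ => ht i
    have hv : 0 ≤ ∑ i ∈ s, X i := sum_nonneg fun i _ => hX i
    refine le_of_mul_le_mul_right ?_ (Gamma_pos_of_pos (by linarith : 0 < y + 1))
    calc Gamma (t a + y + 1) * (X a ^ t a * ∏ i ∈ s, X i ^ t i) * Gamma (y + 1)
        = Gamma (t a + y + 1) * X a ^ t a * (Gamma (y + 1) * ∏ i ∈ s, X i ^ t i) := by ring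
      _ ≤ Gamma (t a + y + 1) * X a ^ t a *
            ((∑ i ∈ s, X i) ^ y * ∏ i ∈ s, Gamma (t i + 1)) := by
        gcongr
        exact mul_nonneg (Gamma_nonneg_of_nonneg (by linarith [ht a])) (rpow_nonneg (hX a) _)
      _ = Gamma (t a + y + 1) * (X a ^ t a * (∑ i ∈ s, X i) ^ y) *
            ∏ i ∈ s, Gamma (t i + 1) := by
        ring
      _ ≤ (X a + ∑ i ∈ s, X i) ^ (t a + y) * (Gamma (t a + 1) * Gamma (y + 1)) *
            ∏ i ∈ s, Gamma (t i + 1) := by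
        refine mul_le_mul_of_nonneg_right ?_
          (prod_nonneg fun i _ => Gamma_nonneg_of_nonneg (by linarith [ht i]))
        exact Gamma_add_one_mul_rpow_mul_rpow_le (ht a) hy (hX a) hv
      _ = _ := by ring

theorem Real.Gamma_add_nat_eq_mul_prod {c : ℝ} (hc : 0 < c) (d : ℕ) :
    Gamma (c + d) = Gamma c * ∏ k ∈ range d, (c + k) := by
  induction d with
  | zero => simp
  | succ d ih =>
    rw [Nat.cast_succ, ← add_assoc, Gamma_add_one (by positivity), ih, prod_range_succ]
    ring

theorem Kd_le_Gamma_div_Gamma {d : ℕ} {α : Fin d → ℝ} {β : ℝ} (hα : ∀ i, 1 ≤ α i)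
    (hβ : 1 ≤ β) {x : Fin d → ℝ} (hx : x ∈ Sd d) :
    Kd α β x ≤ Gamma (∑ i, α i + β) / Gamma (∑ i, α i + β - d) := by
  obtain ⟨hx0, hx1⟩ := hx
  set t : Fin (d + 1) → ℝ := Fin.cons (β - 1) fun i => α i - 1
  set X : Fin (d + 1) → ℝ := Fin.cons (1 - ∑ i, x i) x
  have ht : ∀ i, 0 ≤ t i :=
    Fin.cases (by simpa [t] using hβ) fun i => by simpa [t] using hα i
  have hX : ∀ i, 0 ≤ X i :=
    Fin.cases (by simpa [X] using hx1) fun i => by simpa [X] using hx0 i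
  have hsumX : ∑ i, X i = 1 := by simp [X, Fin.sum_cons]
  have hsumt : ∑ i, t i + 1 = ∑ i, α i + β - d := by
    simp only [t, Fin.sum_cons, sum_sub_distrib, sum_const, card_univ, Fintype.card_fin,
      nsmul_eq_mul, mul_one]
    ring
  have hGamma : ∏ i, Gamma (t i + 1) = Gamma β * ∏ i, Gamma (α i) := by
    simp [t, Fin.prod_univ_succ]
  have hprod : ∏ i, X i ^ t i = (1 - ∑ i, x i) ^ (β - 1) * ∏ i, x i ^ (α i - 1) := by
    simp [X, t, Fin.prod_univ_succ]
  have key := Gamma_sum_add_one_mul_prod_rpow_le univ ht hX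
  rw [hsumX, one_rpow, one_mul, hsumt, hGamma, hprod] at key
  have hS : 0 < ∑ i, α i + β - d := by
    rw [← hsumt]; linarith [sum_nonneg fun i (_ : i ∈ univ) => ht i]
  have hpos := Gamma_pos_of_pos hS
  rw [Kd, mul_assoc, div_mul_eq_mul_div, div_le_div_iff₀ _ hpos]
  · calc Gamma (∑ i, α i + β) * ((1 - ∑ i, x i) ^ (β - 1) * ∏ i, x i ^ (α i - 1)) *
          Gamma (∑ i, α i + β - d)
        = Gamma (∑ i, α i + β) * (Gamma (∑ i, α i + β - d) *
            ((1 - ∑ i, x i) ^ (β - 1) * ∏ i, x i ^ (α i - 1))) := by ring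
      _ ≤ Gamma (∑ i, α i + β) * (Gamma β * ∏ i, Gamma (α i)) :=
        mul_le_mul_of_nonneg_left key
          (Gamma_nonneg_of_nonneg (by linarith [d.cast_nonneg (α := ℝ)]))
  · exact mul_pos (Gamma_pos_of_pos (by linarith))
      (prod_pos fun i _ => Gamma_pos_of_pos (by linarith [hα i]))

/-- Global bound on the Dirichlet kernel:
`κ_{s,b}(x) ≤ ∏_{k=1}^d (1/b + k)` for all `s, x ∈ S_d`. -/
theorem stmt5 (d : ℕ) (b : ℝ) (hb : 0 < b) :
    ∀ s ∈ Sd d, ∀ x ∈ Sd d,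
      kap s b x ≤ ∏ k ∈ Finset.range d, (1 / b + (k + 1)) := by
  rintro s ⟨hs0, hs1⟩ x hx
  have hsum : ∑ i, (s i / b + 1) + ((1 - ∑ i, s i) / b + 1) = (1 / b + 1) + d := by
    rw [sum_add_distrib, ← sum_div]
    simp only [sum_const, card_univ, Fintype.card_fin, nsmul_eq_mul, mul_one]
    field_simp
    ring
  calc kap s b x
      ≤ Gamma (1 / b + 1 + d) / Gamma (1 / b + 1 + d - d) := by
        rw [← hsum]
        refine Kd_le_Gamma_div_Gamma (fun i => ?_) ?_ hx
        · have := hs0 i; simp only [le_add_iff_nonneg_left]; positivity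
        · have : 0 ≤ 1 - ∑ i, s i := sub_nonneg.2 hs1
          simp only [le_add_iff_nonneg_left]; positivity
    _ = ∏ k ∈ range d, (1 / b + (k + 1)) := by
        rw [add_sub_cancel_right, Gamma_add_nat_eq_mul_prod (by positivity),
          mul_div_cancel_left₀ _ (Gamma_pos_of_pos (by positivity)).ne']
        exact prod_congr rfl fun k _ => by ring
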